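/- arXiv:2207.03922 — 2 statements merged into one kernel-verified Lean document; each statement's English description precedes it below -/
import Mathlib

section
/- Let u(x) := Σ_{j=1}^{∞} i_j(x)·4^{−j} on [0,1)². For every n ≥ 1 and every (i₁,…,i_n) ∈ {0,1,2,3}ⁿ, put s := Σ_{j=1}^{n} i_j·4^{−j}. Then the symmetric difference of the sets { x ∈ [0,1)² : s < u(x) < s + 4^{−n} } and Q_{i₁,…,i_n} is a Lebesgue-null subset of ℝ². -/
open MeasureTheory Set Filter
open scoped ENNReal NNReal

noncomputable section

/-- The half-open unit square `[0,1)²` in `ℝ²`. -/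
def unitSq : Set (ℝ × ℝ) := Set.Ico (0:ℝ) 1 ×ˢ Set.Ico (0:ℝ) 1

/-- The four contractions `B₀, B₁, B₂, B₃` mapping `[0,1)²` onto its four half-open
dyadic subsquares (lower-left, lower-right, upper-left, upper-right). -/
def Bmap (i : Fin 4) (x : ℝ × ℝ) : ℝ × ℝ :=
  (x.1 / 2 + (if i.val % 2 = 1 then (1:ℝ)/2 else 0),
   x.2 / 2 + (if 2 ≤ i.val then (1:ℝ)/2 else 0))

/-- The inverse maps `A₀, A₁, A₂, A₃` of `B₀, …, B₃`. -/
def Amap (i : Fin 4) (x : ℝ × ℝ) : ℝ × ℝ :=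
  (2 * x.1 - (if i.val % 2 = 1 then (1:ℝ) else 0),
   2 * x.2 - (if 2 ≤ i.val then (1:ℝ) else 0))

/-- The four half-open dyadic subsquares `Q₀, Q₁, Q₂, Q₃` of `[0,1)²`. -/
def Qsub (i : Fin 4) : Set (ℝ × ℝ) := Bmap i '' unitSq

/-- The step function `ū = Σ_{i=0}^{3} (i/4)·1_{Q_i}`. -/
def ubar (x : ℝ × ℝ) : ℝ :=
  ∑ i : Fin 4, ((i.val : ℝ) / 4) * (Qsub i).indicator (fun _ => (1:ℝ)) x

/-- The operator `L`: `(Lv)(x) = ū(x) + (1/4) Σ_i v(A_i x)·1_{Q_i}(x)` on `[0,1)²`,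
extended by `0` outside. -/
def Lop (v : ℝ × ℝ → ℝ) : ℝ × ℝ → ℝ :=
  unitSq.indicator fun x =>
    ubar x + (1/4) * ∑ i : Fin 4, (Qsub i).indicator (fun y => v (Amap i y)) x

/-- The `j`-th binary digit `a_j(s) = ⌊2^j s⌋ − 2⌊2^{j−1} s⌋` of `s ∈ [0,1)` (`j ≥ 1`). -/
def bdigit (j : ℕ) (s : ℝ) : ℤ := ⌊(2:ℝ)^j * s⌋ - 2 * ⌊(2:ℝ)^(j-1) * s⌋

/-- The `j`-th quadrant digit `i_j(x) = a_j(x₁) + 2 a_j(x₂) ∈ {0,1,2,3}` of `x ∈ [0,1)²`. -/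
def qdigit (j : ℕ) (x : ℝ × ℝ) : ℤ := bdigit j x.1 + 2 * bdigit j x.2

/-- The Flat Mountain function `u(x) = Σ_{j≥1} i_j(x)·4^{−j}` on `[0,1)²`, `0` outside. -/
def uFM : ℝ × ℝ → ℝ :=
  unitSq.indicator fun x => ∑' j : ℕ, (qdigit (j+1) x : ℝ) / 4^(j+1)

/-- The iterates `u₀ = 0`, `u_{n+1} = L u_n`. -/
def uIter : ℕ → ℝ × ℝ → ℝ
  | 0 => fun _ => 0
  | (n+1) => Lop (uIter n)

/-- The dyadic square `Q_{i₁,…,i_n} = B_{i₁} ∘ ⋯ ∘ B_{i_n} ([0,1)²)` indexed by a finite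
sequence of quadrant digits. -/
def Qseq : List (Fin 4) → Set (ℝ × ℝ)
  | [] => unitSq
  | (i :: l) => Bmap i '' Qseq l

/-- The `j`-th base-4 digit `t_j = ⌊4^j t⌋ − 4⌊4^{j−1} t⌋` of `t ∈ [0,1)` (`j ≥ 1`). -/
def tdigit (j : ℕ) (t : ℝ) : ℤ := ⌊(4:ℝ)^j * t⌋ - 4 * ⌊(4:ℝ)^(j-1) * t⌋

/-- The Lebesgue (Z-order) space-filling curve `γ`. -/
def lcurve (t : ℝ) : ℝ × ℝ :=
  (∑' j : ℕ, ((tdigit (j+1) t % 2 : ℤ) : ℝ) / 2^(j+1),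
   ∑' j : ℕ, ((tdigit (j+1) t / 2 : ℤ) : ℝ) / 2^(j+1))

end

/-!
The function `u` is self-similar: on `[0,1)²` it takes values in `[0,1]` and
`u (Bᵢ y) = i/4 + u y / 4`. Hence the band of `u` at the value of `i :: l` is exactly `Bᵢ` applied
to the band at the value of `l`, just as `Q_{i :: l} = Bᵢ Q_l`, so the symmetric difference for
`i :: l` is the image under `Bᵢ` of the one for `l`, and `Bᵢ` divides Lebesgue measure by 4.
For the empty word the symmetric difference is `E = {x ∈ [0,1)² | u x ∈ {0, 1}}`, and
self-similarity gives `E ⊆ B₀ E ∪ B₃ E`, whence `|E| ≤ |E| / 2` and `E` is null.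
-/

open scoped symmDiff

lemma bdigit_succ_eq (j : ℕ) (t : ℝ) :
    bdigit (j + 1) t = ⌊2 * (2 ^ j * t)⌋ - 2 * ⌊2 ^ j * t⌋ := by
  rw [bdigit, Nat.add_sub_cancel, pow_succ', mul_assoc]

lemma bdigit_succ_nonneg (j : ℕ) (t : ℝ) : 0 ≤ bdigit (j + 1) t := by
  rw [bdigit_succ_eq, sub_nonneg, Int.le_floor]
  push_cast
  linarith [Int.floor_le (2 ^ j * t)]

lemma bdigit_succ_le_one (j : ℕ) (t : ℝ) : bdigit (j + 1) t ≤ 1 := by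
  have : ⌊2 * (2 ^ j * t)⌋ < 2 * ⌊2 ^ j * t⌋ + 2 := by
    rw [Int.floor_lt]
    push_cast
    linarith [Int.lt_floor_add_one (2 ^ j * t)]
  rw [bdigit_succ_eq]
  omega

lemma bdigit_succ_succ_half_add (j : ℕ) (t : ℝ) (c : ℤ) :
    bdigit (j + 2) ((t + c) / 2) = bdigit (j + 1) t := by
  have h₁ : (2 : ℝ) ^ (j + 2) * ((t + c) / 2) = 2 ^ (j + 1) * t + (2 ^ (j + 1) * c : ℤ) := by
    push_cast; ring
  have h₂ : (2 : ℝ) ^ (j + 1) * ((t + c) / 2) = 2 ^ j * t + (2 ^ j * c : ℤ) := by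
    push_cast; ring
  rw [bdigit, bdigit, show j + 2 - 1 = j + 1 by omega, Nat.add_sub_cancel, h₁, h₂,
    Int.floor_add_intCast, Int.floor_add_intCast]
  ring

lemma half_add_mem_Ico {t : ℝ} (ht : t ∈ Ico (0 : ℝ) 1) {c : ℕ} (hc : c < 2) :
    (t + c) / 2 ∈ Ico (0 : ℝ) 1 := by
  have : (c : ℝ) ≤ 1 := by exact_mod_cast Nat.lt_succ_iff.mp hc
  constructor <;> linarith [ht.1, ht.2]

lemma bdigit_one_half_add {t : ℝ} (ht : t ∈ Ico (0 : ℝ) 1) {c : ℕ} (hc : c < 2) :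
    bdigit 1 ((t + c) / 2) = c := by
  rw [bdigit, pow_one, Nat.sub_self, pow_zero, one_mul, mul_div_cancel₀ _ two_ne_zero,
    Int.floor_add_natCast, Int.floor_eq_zero_iff.mpr ht,
    Int.floor_eq_zero_iff.mpr (half_add_mem_Ico ht hc)]
  ring

lemma qdigit_succ_nonneg (j : ℕ) (x : ℝ × ℝ) : 0 ≤ qdigit (j + 1) x := by
  have := bdigit_succ_nonneg j x.1
  have := bdigit_succ_nonneg j x.2
  rw [qdigit]; omega

lemma qdigit_succ_le_three (j : ℕ) (x : ℝ × ℝ) : qdigit (j + 1) x ≤ 3 := by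
  have := bdigit_succ_le_one j x.1
  have := bdigit_succ_le_one j x.2
  rw [qdigit]; omega

lemma Bmap_apply (i : Fin 4) (x : ℝ × ℝ) :
    Bmap i x = ((x.1 + (i.val % 2 : ℕ)) / 2, (x.2 + (i.val / 2 : ℕ)) / 2) := by
  fin_cases i <;> ext <;> simp [Bmap] <;> ring

lemma Amap_Bmap (i : Fin 4) (x : ℝ × ℝ) : Amap i (Bmap i x) = x := by
  fin_cases i <;> ext <;> simp [Amap, Bmap] <;> ring

lemma Bmap_injective (i : Fin 4) : Function.Injective (Bmap i) :=
  Function.LeftInverse.injective (Amap_Bmap i)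

lemma Bmap_mem_unitSq (i : Fin 4) {x : ℝ × ℝ} (hx : x ∈ unitSq) : Bmap i x ∈ unitSq := by
  rw [Bmap_apply]
  exact ⟨half_add_mem_Ico hx.1 (Nat.mod_lt _ two_pos), half_add_mem_Ico hx.2 (by omega)⟩

lemma qdigit_one_Bmap (i : Fin 4) {x : ℝ × ℝ} (hx : x ∈ unitSq) :
    qdigit 1 (Bmap i x) = i.val := by
  rw [Bmap_apply, qdigit, bdigit_one_half_add hx.1 (Nat.mod_lt _ two_pos),
    bdigit_one_half_add hx.2 (by omega)]
  exact_mod_cast Nat.mod_add_div i.val 2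

lemma qdigit_succ_succ_Bmap (i : Fin 4) (j : ℕ) (x : ℝ × ℝ) :
    qdigit (j + 2) (Bmap i x) = qdigit (j + 1) x := by
  rw [Bmap_apply, qdigit, qdigit]
  exact_mod_cast congrArg₂ (· + 2 * ·) (bdigit_succ_succ_half_add j x.1 (i.val % 2))
    (bdigit_succ_succ_half_add j x.2 (i.val / 2))

lemma exists_half_add_eq {t : ℝ} (ht : t ∈ Ico (0 : ℝ) 1) :
    ∃ c : ℕ, c < 2 ∧ ∃ s ∈ Ico (0 : ℝ) 1, (s + c) / 2 = t := by
  rcases lt_or_ge t (1 / 2) with h | h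
  · exact ⟨0, two_pos, 2 * t, ⟨by linarith [ht.1], by linarith⟩, by push_cast; ring⟩
  · exact ⟨1, one_lt_two, 2 * t - 1, ⟨by linarith, by linarith [ht.2]⟩, by simp⟩

lemma exists_Bmap_eq {x : ℝ × ℝ} (hx : x ∈ unitSq) : ∃ i, ∃ y ∈ unitSq, Bmap i y = x := by
  obtain ⟨c₁, hc₁, s₁, hs₁, h₁⟩ := exists_half_add_eq hx.1
  obtain ⟨c₂, hc₂, s₂, hs₂, h₂⟩ := exists_half_add_eq hx.2
  refine ⟨⟨c₁ + 2 * c₂, by omega⟩, (s₁, s₂), ⟨hs₁, hs₂⟩, ?_⟩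
  have hmod : (c₁ + 2 * c₂) % 2 = c₁ := by omega
  have hdiv : (c₁ + 2 * c₂) / 2 = c₂ := by omega
  simp only [Bmap_apply, hmod, hdiv, h₁, h₂]

lemma hasSum_three_div_four_pow : HasSum (fun j : ℕ => (3 : ℝ) / 4 ^ (j + 1)) 1 := by
  have h := (hasSum_geometric_of_lt_one (r := (4 : ℝ)⁻¹) (by norm_num) (by norm_num)).mul_left
    (3 / 4)
  have e : (fun j : ℕ => (3 : ℝ) / 4 ^ (j + 1)) = fun j => 3 / 4 * 4⁻¹ ^ j := by
    ext j
    rw [pow_succ, inv_pow]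
    field_simp
  rw [e]
  rwa [show (3 : ℝ) / 4 * (1 - 4⁻¹)⁻¹ = 1 by norm_num] at h

lemma qdigit_div_nonneg (j : ℕ) (x : ℝ × ℝ) : 0 ≤ (qdigit (j + 1) x : ℝ) / 4 ^ (j + 1) :=
  div_nonneg (by exact_mod_cast qdigit_succ_nonneg j x) (by positivity)

lemma qdigit_div_le (j : ℕ) (x : ℝ × ℝ) :
    (qdigit (j + 1) x : ℝ) / 4 ^ (j + 1) ≤ 3 / 4 ^ (j + 1) :=
  div_le_div_of_nonneg_right (by exact_mod_cast qdigit_succ_le_three j x) (by positivity)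

lemma summable_qdigit_div (x : ℝ × ℝ) :
    Summable fun j : ℕ => (qdigit (j + 1) x : ℝ) / 4 ^ (j + 1) :=
  hasSum_three_div_four_pow.summable.of_nonneg_of_le (qdigit_div_nonneg · x) (qdigit_div_le · x)

lemma uFM_nonneg (x : ℝ × ℝ) : 0 ≤ uFM x :=
  indicator_nonneg (fun x _ => tsum_nonneg (qdigit_div_nonneg · x)) x

lemma uFM_le_one (x : ℝ × ℝ) : uFM x ≤ 1 := by
  refine indicator_apply_le' (fun _ => ?_) (fun _ => zero_le_one)
  rw [← hasSum_three_div_four_pow.tsum_eq]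
  exact (summable_qdigit_div x).tsum_le_tsum (qdigit_div_le · x) hasSum_three_div_four_pow.summable

lemma uFM_Bmap (i : Fin 4) {y : ℝ × ℝ} (hy : y ∈ unitSq) :
    uFM (Bmap i y) = i.val / 4 + uFM y / 4 := by
  rw [uFM, indicator_of_mem (Bmap_mem_unitSq i hy), indicator_of_mem hy,
    (summable_qdigit_div _).tsum_eq_zero_add, ← tsum_div_const]
  simp only [zero_add, pow_one, qdigit_one_Bmap i hy, qdigit_succ_succ_Bmap, pow_succ _ (_ + 1),
    div_div]
  push_cast
  rfl

lemma uFM_Bmap_mem_Icc (i : Fin 4) {y : ℝ × ℝ} (hy : y ∈ unitSq) :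
    uFM (Bmap i y) ∈ Icc (i.val / 4 : ℝ) ((i.val + 1) / 4) := by
  rw [uFM_Bmap i hy]
  constructor <;> linarith [uFM_nonneg y, uFM_le_one y]

lemma volume_image_Bmap (i : Fin 4) (S : Set (ℝ × ℝ)) :
    volume (Bmap i '' S) = 4⁻¹ * volume S := by
  have h : Bmap i =
      (· + (((i.val % 2 : ℕ) : ℝ) / 2, ((i.val / 2 : ℕ) : ℝ) / 2)) ∘ ((2 : ℝ)⁻¹ • ·) := by
    ext x <;> simp [Bmap_apply] <;> ring
  rw [h, image_comp, image_add_right, measure_preimage_add_right, image_smul,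
    Measure.addHaar_smul]
  simp only [Module.finrank_prod, Module.finrank_self, inv_pow, abs_inv, abs_pow, Nat.abs_ofNat,
    ENNReal.ofReal_inv_of_pos (by positivity : (0 : ℝ) < 2 ^ (1 + 1)),
    ENNReal.ofReal_pow zero_le_two, ENNReal.ofReal_ofNat]
  norm_num

noncomputable def digitValue (l : List (Fin 4)) : ℝ :=
  ∑ j : Fin l.length, ((l.get j).val : ℝ) / 4 ^ ((j : ℕ) + 1)

def levelBand (l : List (Fin 4)) : Set (ℝ × ℝ) :=
  {x | x ∈ unitSq ∧ digitValue l < uFM x ∧ uFM x < digitValue l + 1 / 4 ^ l.length}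

lemma digitValue_nil : digitValue [] = 0 := rfl

lemma digitValue_cons (i : Fin 4) (l : List (Fin 4)) :
    digitValue (i :: l) = i.val / 4 + digitValue l / 4 := by
  simp only [digitValue, List.length_cons, Fin.sum_univ_succ]
  simp [Finset.sum_div, pow_succ, div_div]

lemma digitValue_nonneg (l : List (Fin 4)) : 0 ≤ digitValue l :=
  Finset.sum_nonneg fun _ _ => by positivity

lemma digitValue_add_le_one : ∀ l : List (Fin 4), digitValue l + 1 / 4 ^ l.length ≤ 1
  | [] => by simp [digitValue_nil]
  | i :: l => by
    have hi : (i.val : ℝ) ≤ 3 := by exact_mod_cast Nat.le_of_lt_succ i.isLt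
    have := digitValue_add_le_one l
    rw [digitValue_cons, List.length_cons, pow_succ, ← div_div]
    linarith

lemma levelBand_cons (i : Fin 4) (l : List (Fin 4)) :
    levelBand (i :: l) = Bmap i '' levelBand l := by
  have hw : (1 : ℝ) / 4 ^ (i :: l).length = 1 / 4 ^ l.length / 4 := by
    rw [List.length_cons, pow_succ, div_div]
  have hs₀ := digitValue_nonneg l
  have hs₁ := digitValue_add_le_one l
  ext x
  simp only [levelBand, mem_ofPred_eq, mem_image, hw, digitValue_cons]
  constructor
  · rintro ⟨hx, hlo, hhi⟩
    obtain ⟨k, y, hy, rfl⟩ := exists_Bmap_eq hx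
    obtain ⟨hk₀, hk₁⟩ := uFM_Bmap_mem_Icc k hy
    have hki : (k.val : ℝ) < i.val + 1 := by linarith
    have hik : (i.val : ℝ) < k.val + 1 := by linarith
    have hk : k = i := by
      norm_cast at hki hik
      omega
    subst hk
    rw [uFM_Bmap k hy] at hlo hhi
    exact ⟨y, ⟨hy, by linarith, by linarith⟩, rfl⟩
  · rintro ⟨y, ⟨hy, hlo, hhi⟩, rfl⟩
    rw [uFM_Bmap i hy]
    exact ⟨Bmap_mem_unitSq i hy, by linarith, by linarith⟩

lemma ENNReal.eq_zero_of_le_mul_of_lt_one {a c : ℝ≥0∞} (ha : a ≠ ⊤) (hc : c < 1)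
    (h : a ≤ c * a) : a = 0 := by
  by_contra h₀
  have := ENNReal.mul_lt_mul_right h₀ ha hc
  rw [mul_one, mul_comm] at this
  exact this.not_ge h

lemma mem_levelBand_nil {x : ℝ × ℝ} :
    x ∈ levelBand [] ↔ x ∈ unitSq ∧ 0 < uFM x ∧ uFM x < 1 := by
  simp only [levelBand, digitValue_nil, List.length_nil, pow_zero, div_one, zero_add,
    mem_ofPred_eq]

lemma unitSq_diff_levelBand_nil_subset :
    unitSq \ levelBand [] ⊆
      Bmap 0 '' (unitSq \ levelBand []) ∪ Bmap 3 '' (unitSq \ levelBand []) := by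
  rintro x ⟨hx, hxE⟩
  obtain ⟨k, y, hy, rfl⟩ := exists_Bmap_eq hx
  obtain ⟨hk₀, hk₁⟩ := uFM_Bmap_mem_Icc k hy
  have hk₃ : (k.val : ℝ) ≤ 3 := by exact_mod_cast Nat.le_of_lt_succ k.isLt
  have hu := uFM_Bmap k hy
  rw [mem_levelBand_nil, not_and, not_and_or, not_lt, not_lt] at hxE
  rcases hxE hx with h | h
  · have hk : k = 0 := by
      have : (k.val : ℝ) < 1 := by linarith
      have : k.val < 1 := by exact_mod_cast this
      omega
    subst hk
    refine Or.inl ⟨y, ⟨hy, fun hyB => ?_⟩, rfl⟩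
    linarith [(mem_levelBand_nil.mp hyB).2.1]
  · have hk : k = 3 := by
      have : (2 : ℝ) < k.val := by linarith
      have : 2 < k.val := by exact_mod_cast this
      omega
    subst hk
    refine Or.inr ⟨y, ⟨hy, fun hyB => ?_⟩, rfl⟩
    linarith [(mem_levelBand_nil.mp hyB).2.2, uFM_le_one y]

lemma volume_unitSq_diff_levelBand_nil : volume (unitSq \ levelBand []) = 0 := by
  have hfin : volume (unitSq \ levelBand []) ≠ ⊤ :=
    (((Metric.isBounded_Ico 0 1).prod (Metric.isBounded_Ico 0 1)).subset
      sdiff_subset).measure_lt_top.ne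
  have h := (measure_mono (μ := volume) unitSq_diff_levelBand_nil_subset).trans
    (measure_union_le _ _)
  rw [volume_image_Bmap, volume_image_Bmap, ← add_mul] at h
  refine ENNReal.eq_zero_of_le_mul_of_lt_one hfin ?_ h
  rw [← ENNReal.inv_two_add_inv_two]
  have : (4⁻¹ : ℝ≥0∞) < 2⁻¹ := ENNReal.inv_lt_inv.mpr (by norm_num)
  exact ENNReal.add_lt_add this this

theorem volume_levelBand_symmDiff_Qseq : ∀ l, volume (levelBand l ∆ Qseq l) = 0
  | [] => by
    rw [Qseq, symmDiff_of_le (fun x hx => hx.1), volume_unitSq_diff_levelBand_nil]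
  | i :: l => by
    rw [levelBand_cons, Qseq, ← image_symmDiff (Bmap_injective i), volume_image_Bmap,
      volume_levelBand_symmDiff_Qseq l, mul_zero]

theorem stmt12_general (l : List (Fin 4)) :
    volume (symmDiff
      {x : ℝ × ℝ | x ∈ unitSq ∧
        (∑ j : Fin l.length, ((l.get j).val : ℝ) / 4 ^ ((j : ℕ) + 1)) < uFM x ∧
        uFM x < (∑ j : Fin l.length, ((l.get j).val : ℝ) / 4 ^ ((j : ℕ) + 1))
          + 1 / 4 ^ l.length}
      (Qseq l)) = 0 :=
  volume_levelBand_symmDiff_Qseq l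

/-- Item (iii) of the properties lemma: the open level band
`{ s < u < s + 4^{−n} }` of `u` at the dyadic value `s = Σ_{j=1}^{n} i_j 4^{−j}`
coincides, up to a Lebesgue-null set, with the dyadic square `Q_{i₁,…,i_n}`. -/
theorem stmt12 (l : List (Fin 4)) (hl : 1 ≤ l.length) :
    volume (symmDiff
      {x : ℝ × ℝ | x ∈ unitSq ∧
        (∑ j : Fin l.length, ((l.get j).val : ℝ) / 4 ^ ((j : ℕ) + 1)) < uFM x ∧
        uFM x < (∑ j : Fin l.length, ((l.get j).val : ℝ) / 4 ^ ((j : ℕ) + 1))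
          + 1 / 4 ^ l.length}
      (Qseq l)) = 0 :=
  stmt12_general l
end

section
/- Let u(x) := Σ_{j=1}^{∞} i_j(x)·4^{−j} on [0,1)², and let γ : [0,1) → [0,1]² be the Lebesgue curve γ(t) := ( Σ_{j=1}^{∞} (t_j mod 2)·2^{−j} , Σ_{j=1}^{∞} ⌊t_j/2⌋·2^{−j} ) with t_j := ⌊4^j t⌋ − 4⌊4^{j−1} t⌋. Then for every t ∈ [0,1), the normalized restrictions h^{−1}·1_{{x ∈ [0,1)² : t ≤ u(x) ≤ t+h}}·L² converge weakly to the Dirac mass δ_{γ(t)} as h → 0⁺; that is, for every bounded continuous f : ℝ² → ℝ, lim_{h→0⁺} (1/h) ∫_{{x ∈ [0,1)² : t ≤ u(x) ≤ t+h}} f(x) dL²(x) = f(γ(t)). -/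
/-!
The base-4 digits of `u x` are the quadrant digits `i_j(x)`, which interleave the binary digits of
`x₁` and `x₂`. Hence `⌊4ⁿ u x⌋` is the Morton (Z-order) index of the dyadic square of side `2⁻ⁿ`
containing `x`. Morton indexing is a bijection between these `4ⁿ` squares and `{0, …, 4ⁿ - 1}`, so
`u` pushes Lebesgue measure on `[0,1)²` forward to Lebesgue measure on `[0,1)`, and the band
`{t ≤ u ≤ t + h}` has area exactly `h`. Once `t + h < (⌊4ⁿ t⌋ + 1) / 4ⁿ`, the whole band lies in the
square of Morton index `⌊4ⁿ t⌋`, whose closure contains `γ t`; so the band shrinks to `γ t` and the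
normalised integrals of a continuous `f` converge to `f (γ t)`.
-/

open MeasureTheory Set Filter
open scoped ENNReal NNReal

open Topology

theorem tendsto_setIntegral_div_of_concentrates {X : Type*} [PseudoMetricSpace X]
    [MeasurableSpace X] {μ : Measure X} {f : X → ℝ} {p : X} {S : ℝ → Set X}
    (hfp : ContinuousAt f p) (hfm : AEStronglyMeasurable f μ) (hSm : ∀ h, MeasurableSet (S h))
    (hμS : ∀ᶠ h in 𝓝[>] 0, μ (S h) = ENNReal.ofReal h)
    (hS : ∀ δ > 0, ∀ᶠ h in 𝓝[>] 0, S h ⊆ Metric.ball p δ) :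
    Tendsto (fun h => (1 / h) * ∫ x in S h, f x ∂μ) (𝓝[>] 0) (𝓝 (f p)) := by
  rw [Metric.tendsto_nhds]
  intro ε hε
  obtain ⟨δ, hδ, hfδ⟩ := Metric.continuousAt_iff.1 hfp (ε / 2) (half_pos hε)
  filter_upwards [hμS, hS δ hδ, self_mem_nhdsWithin] with h hμ hsub (hh : 0 < h)
  have hfin : μ (S h) ≠ ⊤ := by simp [hμ]
  have hclose : ∀ x ∈ S h, ‖f x - f p‖ ≤ ε / 2 := fun x hx =>
    (hfδ (Metric.mem_ball.1 (hsub hx))).le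
  have hint : IntegrableOn f (S h) μ :=
    Measure.integrableOn_of_bounded hfin hfm (M := ‖f p‖ + ε / 2)
      (ae_restrict_of_forall_mem (hSm h) fun x hx => by
        have := norm_le_insert' (f x) (f p); linarith [hclose x hx])
  have hreal : μ.real (S h) = h := by simp [measureReal_def, hμ, hh.le]
  have hdiff :
      (1 / h) * ∫ x in S h, f x ∂μ - f p = (1 / h) * ∫ x in S h, (f x - f p) ∂μ := by
    rw [integral_sub hint (integrableOn_const hfin), setIntegral_const, smul_eq_mul, hreal]
    field_simp
  have hbound := norm_setIntegral_le_of_norm_le_const hfin.lt_top hclose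
  rw [hreal] at hbound
  rw [Real.dist_eq, hdiff, abs_mul, abs_of_pos (by positivity)]
  calc 1 / h * |∫ x in S h, (f x - f p) ∂μ| ≤ 1 / h * (ε / 2 * h) := by gcongr; exact hbound
    _ = ε / 2 := by field_simp
    _ < ε := half_lt_self hε

/-- The integer whose base-`b` digits, most significant first, are `e 0, …, e (n - 1)`. -/
def ofDigitsPrefix (b : ℕ) (e : ℕ → ℤ) : ℕ → ℤ
  | 0 => 0
  | n + 1 => b * ofDigitsPrefix b e n + e n

/-- The real number `0.e₀e₁e₂…` in base `b`. -/
noncomputable def digitsValue (b : ℕ) (e : ℕ → ℤ) : ℝ :=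
  ∑' j, (e j : ℝ) / (b : ℝ) ^ (j + 1)

lemma hasSum_sub_one_div_pow_succ {r : ℝ} (hr : 1 < r) :
    HasSum (fun j : ℕ => (r - 1) / r ^ (j + 1)) 1 := by
  have hr0 : r ≠ 0 := by positivity
  have h := (hasSum_geometric_of_lt_one (by positivity) (inv_lt_one_of_one_lt₀ hr)).mul_left
    ((r - 1) / r)
  have hlim : (r - 1) / r * (1 - r⁻¹)⁻¹ = 1 := by
    field_simp [sub_ne_zero.2 hr.ne']
  rw [hlim] at h
  refine h.congr_fun fun j => ?_
  rw [inv_pow, pow_succ]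
  field_simp

section Digits

variable {b : ℕ} {e : ℕ → ℤ}

lemma ofDigitsPrefix_mem (he : ∀ j, e j ∈ Ico 0 (b : ℤ)) (n : ℕ) :
    ofDigitsPrefix b e n ∈ Ico 0 ((b : ℤ) ^ n) := by
  induction n with
  | zero => simp [ofDigitsPrefix]
  | succ n ih =>
    obtain ⟨h0, h1⟩ := ih
    obtain ⟨d0, d1⟩ := he n
    refine ⟨by simp only [ofDigitsPrefix]; positivity, ?_⟩
    simp only [ofDigitsPrefix, pow_succ]
    nlinarith

lemma digit_div_pow_succ_le (he : ∀ j, e j ∈ Ico 0 (b : ℤ)) (j : ℕ) :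
    (e j : ℝ) / (b : ℝ) ^ (j + 1) ≤ ((b : ℝ) - 1) / (b : ℝ) ^ (j + 1) := by
  have : e j ≤ (b : ℤ) - 1 := by have := (he j).2; omega
  have : (e j : ℝ) ≤ (b : ℝ) - 1 := by exact_mod_cast this
  gcongr

lemma summable_digits (hb : 1 < b) (he : ∀ j, e j ∈ Ico 0 (b : ℤ)) :
    Summable fun j => (e j : ℝ) / (b : ℝ) ^ (j + 1) :=
  Summable.of_nonneg_of_le (fun j => div_nonneg (by exact_mod_cast (he j).1) (by positivity))
    (digit_div_pow_succ_le he) (hasSum_sub_one_div_pow_succ (Nat.one_lt_cast.2 hb)).summable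

lemma digitsValue_nonneg (he : ∀ j, 0 ≤ e j) : 0 ≤ digitsValue b e :=
  tsum_nonneg fun j => div_nonneg (by exact_mod_cast he j) (by positivity)

lemma digitsValue_le_one (hb : 1 < b) (he : ∀ j, e j ∈ Ico 0 (b : ℤ)) :
    digitsValue b e ≤ 1 :=
  (hasSum_sub_one_div_pow_succ (Nat.one_lt_cast.2 hb)).tsum_eq ▸
    Summable.tsum_le_tsum (digit_div_pow_succ_le he) (summable_digits hb he)
      (hasSum_sub_one_div_pow_succ (Nat.one_lt_cast.2 hb)).summable

lemma digitsValue_lt_one (hb : 1 < b) (he : ∀ j, e j ∈ Ico 0 (b : ℤ)) {k : ℕ}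
    (hk : e k < b - 1) : digitsValue b e < 1 := by
  have hlt : (e k : ℝ) / (b : ℝ) ^ (k + 1) < ((b : ℝ) - 1) / (b : ℝ) ^ (k + 1) := by
    have : (e k : ℝ) < (b : ℝ) - 1 := by exact_mod_cast hk
    gcongr
  exact (hasSum_sub_one_div_pow_succ (Nat.one_lt_cast.2 hb)).tsum_eq ▸
    Summable.tsum_lt_tsum (digit_div_pow_succ_le he) hlt (summable_digits hb he)
      (hasSum_sub_one_div_pow_succ (Nat.one_lt_cast.2 hb)).summable

lemma digitsValue_eq_add_shift (hb : 1 < b) (he : ∀ j, e j ∈ Ico 0 (b : ℤ)) :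
    digitsValue b e = (e 0 + digitsValue b fun j => e (j + 1)) / b := by
  rw [digitsValue, (summable_digits hb he).tsum_eq_zero_add, digitsValue, add_div,
    ← tsum_div_const]
  congr 1
  · simp
  · congr 1
    ext j
    rw [div_div, ← pow_succ]

lemma pow_mul_digitsValue (hb : 1 < b) (he : ∀ j, e j ∈ Ico 0 (b : ℤ)) (n : ℕ) :
    (b : ℝ) ^ n * digitsValue b e = ofDigitsPrefix b e n + digitsValue b fun j => e (n + j) := by
  induction n with
  | zero => simp [ofDigitsPrefix]
  | succ n ih =>
    have hshift := digitsValue_eq_add_shift hb (e := fun j => e (n + j)) fun j => he _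
    simp only [add_zero, ← add_assoc] at hshift
    have hb0 : (b : ℝ) ≠ 0 := by positivity
    rw [pow_succ, mul_comm _ (b : ℝ), mul_assoc, ih, hshift]
    simp only [ofDigitsPrefix]
    push_cast
    field_simp
    ring_nf

lemma digitsValue_mem_Icc (hb : 1 < b) (he : ∀ j, e j ∈ Ico 0 (b : ℤ)) (n : ℕ) :
    digitsValue b e ∈ Icc ((ofDigitsPrefix b e n : ℝ) / b ^ n)
      (((ofDigitsPrefix b e n : ℝ) + 1) / b ^ n) := by
  have hbn : (0 : ℝ) < (b : ℝ) ^ n := by positivity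
  have h := pow_mul_digitsValue hb he n
  have h0 := digitsValue_nonneg (b := b) fun j => (he (n + j)).1
  have h1 := digitsValue_le_one hb (e := fun j => e (n + j)) fun j => he _
  constructor
  · rw [div_le_iff₀ hbn]; linarith
  · rw [le_div_iff₀ hbn]; linarith

lemma floor_pow_mul_digitsValue (hb : 1 < b) (he : ∀ j, e j ∈ Ico 0 (b : ℤ)) {n : ℕ}
    (hfreq : ∃ k ≥ n, e k < b - 1) :
    ⌊(b : ℝ) ^ n * digitsValue b e⌋ = ofDigitsPrefix b e n := by
  obtain ⟨k, hkn, hk⟩ := hfreq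
  have h0 := digitsValue_nonneg (b := b) fun j => (he (n + j)).1
  have h1 := digitsValue_lt_one hb (e := fun j => e (n + j)) (k := k - n) (fun j => he _)
    (by rwa [Nat.add_sub_cancel' hkn])
  rw [pow_mul_digitsValue hb he, Int.floor_eq_iff]
  constructor <;> linarith

lemma abs_sub_digitsValue_le (hb : 1 < b) (he : ∀ j, e j ∈ Ico 0 (b : ℤ)) {n : ℕ} {s : ℝ}
    (hs : ⌊(b : ℝ) ^ n * s⌋ = ofDigitsPrefix b e n) :
    |s - digitsValue b e| ≤ ((b : ℝ) ^ n)⁻¹ := by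
  have hbn : (0 : ℝ) < (b : ℝ) ^ n := by positivity
  obtain ⟨hv0, hv1⟩ := digitsValue_mem_Icc hb he n
  have hs0 := Int.floor_le ((b : ℝ) ^ n * s)
  have hs1 := Int.lt_floor_add_one ((b : ℝ) ^ n * s)
  rw [hs] at hs0 hs1
  have hs0' : (ofDigitsPrefix b e n : ℝ) / b ^ n ≤ s := by rw [div_le_iff₀ hbn]; linarith
  have hs1' : s < ((ofDigitsPrefix b e n : ℝ) + 1) / b ^ n := by rw [lt_div_iff₀ hbn]; linarith
  rw [add_div, one_div] at hv1 hs1'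
  rw [abs_sub_le_iff]
  constructor <;> linarith

lemma measurable_digitsValue {α : Type*} [MeasurableSpace α] (hb : 1 < b)
    {e : α → ℕ → ℤ} (he : ∀ x j, e x j ∈ Ico 0 (b : ℤ))
    (hm : ∀ j, Measurable fun x => e x j) :
    Measurable fun x => digitsValue b (e x) :=
  measurable_of_tendsto_metrizable
    (fun _ => Finset.measurable_sum _ fun j _ => (measurable_from_top.comp (hm j)).div_const _)
    (tendsto_pi_nhds.2 fun x => (summable_digits hb (he x)).hasSum.tendsto_sum_nat)

lemma floor_mul_sub_mul_floor_mem (hb : 0 < b) (y : ℝ) :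
    ⌊(b : ℝ) * y⌋ - b * ⌊y⌋ ∈ Ico 0 (b : ℤ) := by
  have hbR : (0 : ℝ) < b := by exact_mod_cast hb
  have hlo : (b : ℤ) * ⌊y⌋ ≤ ⌊(b : ℝ) * y⌋ := Int.le_floor.2 (by
    push_cast; exact mul_le_mul_of_nonneg_left (Int.floor_le y) hbR.le)
  have hhi : ⌊(b : ℝ) * y⌋ < b * ⌊y⌋ + b := Int.floor_lt.2 (by
    push_cast; nlinarith [Int.lt_floor_add_one y])
  constructor <;> omega

lemma floor_pow_mul_eq_ofDigitsPrefix {s : ℝ} (hs : s ∈ Ico 0 1) {d : ℕ → ℤ}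
    (hd : ∀ j, d j = ⌊(b : ℝ) ^ (j + 1) * s⌋ - b * ⌊(b : ℝ) ^ j * s⌋) (n : ℕ) :
    ⌊(b : ℝ) ^ n * s⌋ = ofDigitsPrefix b d n := by
  induction n with
  | zero => simpa [ofDigitsPrefix] using hs
  | succ n ih => rw [ofDigitsPrefix, ← ih, hd]; ring

lemma exists_digit_lt (hb : 1 < b) (s : ℝ) (n : ℕ) :
    ∃ k ≥ n, ⌊(b : ℝ) ^ (k + 1) * s⌋ - b * ⌊(b : ℝ) ^ k * s⌋ < b - 1 := by
  by_contra! hcon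
  -- each digit `b - 1` multiplies the gap `1 - fract (bᵏ s)` by `b`, yet it stays in `(0, 1]`
  have hgap : ∀ m, 1 - Int.fract ((b : ℝ) ^ (n + m) * s) =
      (b : ℝ) ^ m * (1 - Int.fract ((b : ℝ) ^ n * s)) := by
    intro m
    induction m with
    | zero => simp
    | succ m ih =>
      have hd := floor_mul_sub_mul_floor_mem (b := b) (by omega) ((b : ℝ) ^ (n + m) * s)
      rw [← mul_assoc, ← pow_succ'] at hd
      have heq :
          ⌊(b : ℝ) ^ (n + m + 1) * s⌋ = b * ⌊(b : ℝ) ^ (n + m) * s⌋ + (b - 1) := by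
        have := hcon (n + m) (by omega)
        have := hd.2
        omega
      rw [Int.fract] at ih
      rw [← add_assoc, Int.fract, heq]
      push_cast
      linear_combination (b : ℝ) * ih
  have hpos : 0 < 1 - Int.fract ((b : ℝ) ^ n * s) := sub_pos.2 (Int.fract_lt_one _)
  obtain ⟨m, hm⟩ := pow_unbounded_of_one_lt (1 - Int.fract ((b : ℝ) ^ n * s))⁻¹
    (Nat.one_lt_cast.2 hb)
  rw [inv_lt_iff_one_lt_mul₀ hpos] at hm
  linarith [hgap m, Int.fract_nonneg ((b : ℝ) ^ (n + m) * s)]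

end Digits

/-- Morton (Z-order) interleaving: the base-4 digits of `morton n p q` are `a + 2c` where `a`, `c`
run through the last `n` binary digits of `p` and `q`. -/
def morton : ℕ → ℤ → ℤ → ℤ
  | 0, _, _ => 0
  | n + 1, p, q => 4 * morton n (p / 2) (q / 2) + (p % 2 + 2 * (q % 2))

lemma morton_ofDigitsPrefix {a c : ℕ → ℤ} (ha : ∀ j, a j ∈ Ico 0 2)
    (hc : ∀ j, c j ∈ Ico 0 2) (n : ℕ) :
    morton n (ofDigitsPrefix 2 a n) (ofDigitsPrefix 2 c n) =
      ofDigitsPrefix 4 (fun j => a j + 2 * c j) n := by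
  induction n with
  | zero => rfl
  | succ n ih =>
    obtain ⟨ha0, ha1⟩ := ha n
    obtain ⟨hc0, hc1⟩ := hc n
    simp only [ofDigitsPrefix, morton, Nat.cast_ofNat] at ih ⊢
    have hdiv : ∀ P d : ℤ, d ∈ Ico 0 2 → (2 * P + d) / 2 = P := fun P d hd => by
      obtain ⟨_, _⟩ := hd; omega
    rw [hdiv _ _ (ha n), hdiv _ _ (hc n), ih]
    omega

lemma morton_mem {n : ℕ} {p q : ℤ} (hp : p ∈ Ico 0 (2 ^ n)) (hq : q ∈ Ico 0 (2 ^ n)) :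
    morton n p q ∈ Ico 0 (4 ^ n) := by
  induction n generalizing p q with
  | zero => simp [morton]
  | succ n ih =>
    obtain ⟨hp0, hp1⟩ := hp
    obtain ⟨hq0, hq1⟩ := hq
    rw [pow_succ] at hp1 hq1
    obtain ⟨h0, h1⟩ :=
      ih (p := p / 2) (q := q / 2) ⟨by omega, by omega⟩ ⟨by omega, by omega⟩
    simp only [morton, pow_succ]
    constructor <;> omega

lemma morton_injOn (n : ℕ) :
    InjOn (fun z : ℤ × ℤ => morton n z.1 z.2) (Ico 0 (2 ^ n) ×ˢ Ico 0 (2 ^ n)) := by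
  induction n with
  | zero =>
    rintro ⟨p, q⟩ ⟨hp, hq⟩ ⟨p', q'⟩ ⟨hp', hq'⟩ -
    simp only [pow_zero, mem_Ico] at hp hq hp' hq'
    simp only [Prod.mk.injEq]
    omega
  | succ n ih =>
    rintro ⟨p, q⟩ ⟨hp, hq⟩ ⟨p', q'⟩ ⟨hp', hq'⟩ h
    simp only [mem_Ico, pow_succ] at hp hq hp' hq'
    simp only [morton] at h
    have hhalf := @ih (p / 2, q / 2) ⟨⟨by omega, by omega⟩, ⟨by omega, by omega⟩⟩
      (p' / 2, q' / 2) ⟨⟨by omega, by omega⟩, ⟨by omega, by omega⟩⟩ (by dsimp; omega)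
    simp only [Prod.mk.injEq] at hhalf ⊢
    omega

lemma morton_surjOn (n : ℕ) :
    SurjOn (fun z : ℤ × ℤ => morton n z.1 z.2) (Ico 0 (2 ^ n) ×ˢ Ico 0 (2 ^ n))
      (Ico 0 (4 ^ n)) := by
  have h := Finset.surjOn_of_injOn_of_card_le (fun z : ℤ × ℤ => morton n z.1 z.2)
    (s := Finset.Ico 0 (2 ^ n) ×ˢ Finset.Ico 0 (2 ^ n)) (t := Finset.Ico 0 (4 ^ n))
    (by simpa [MapsTo] using fun p q hp hq => morton_mem hp hq)
    (by simpa using morton_injOn n)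
    (by simp [Finset.card_product, ← Int.toNat_mul, ← mul_pow])
  simpa using h

lemma measurableSet_unitSq : MeasurableSet unitSq :=
  measurableSet_Ico.prod measurableSet_Ico

lemma volume_unitSq : volume unitSq = 1 := by
  rw [unitSq, Measure.volume_eq_prod, Measure.prod_prod, Real.volume_Ico]
  simp

lemma bdigit_succ (j : ℕ) (s : ℝ) :
    bdigit (j + 1) s = ⌊(2 : ℝ) ^ (j + 1) * s⌋ - 2 * ⌊(2 : ℝ) ^ j * s⌋ := by
  simp [bdigit]

lemma tdigit_succ (j : ℕ) (t : ℝ) :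
    tdigit (j + 1) t = ⌊(4 : ℝ) ^ (j + 1) * t⌋ - 4 * ⌊(4 : ℝ) ^ j * t⌋ := by
  simp [tdigit]

lemma bdigit_mem (j : ℕ) (s : ℝ) : bdigit (j + 1) s ∈ Ico 0 2 := by
  simpa [bdigit_succ, pow_succ', mul_assoc] using
    floor_mul_sub_mul_floor_mem (b := 2) two_pos ((2 : ℝ) ^ j * s)

lemma tdigit_mem (j : ℕ) (t : ℝ) : tdigit (j + 1) t ∈ Ico 0 4 := by
  simpa [tdigit_succ, pow_succ', mul_assoc] using
    floor_mul_sub_mul_floor_mem (b := 4) four_pos ((4 : ℝ) ^ j * t)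

lemma tdigit_emod_two_mem (j : ℕ) (t : ℝ) : tdigit (j + 1) t % 2 ∈ Ico 0 2 := by
  obtain ⟨h0, h1⟩ := tdigit_mem j t
  constructor <;> omega

lemma tdigit_ediv_two_mem (j : ℕ) (t : ℝ) : tdigit (j + 1) t / 2 ∈ Ico 0 2 := by
  obtain ⟨h0, h1⟩ := tdigit_mem j t
  constructor <;> omega

lemma qdigit_mem (j : ℕ) (x : ℝ × ℝ) : qdigit (j + 1) x ∈ Ico 0 4 := by
  obtain ⟨h1, h2⟩ := bdigit_mem j x.1
  obtain ⟨h3, h4⟩ := bdigit_mem j x.2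
  constructor <;> simp only [qdigit] <;> omega

lemma floor_two_pow_mul {s : ℝ} (hs : s ∈ Ico 0 1) (n : ℕ) :
    ⌊(2 : ℝ) ^ n * s⌋ = ofDigitsPrefix 2 (fun j => bdigit (j + 1) s) n := by
  simpa using floor_pow_mul_eq_ofDigitsPrefix (b := 2) hs (fun j => by simp [bdigit_succ]) n

lemma floor_two_pow_mul_mem_Ico_iff (n : ℕ) (s : ℝ) :
    ⌊(2 : ℝ) ^ n * s⌋ ∈ Ico 0 (2 ^ n) ↔ s ∈ Ico 0 1 := by
  have h2n : (0 : ℝ) < 2 ^ n := by positivity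
  simp only [mem_Ico, Int.floor_nonneg, Int.floor_lt]
  push_cast
  rw [mul_nonneg_iff_of_pos_left h2n, mul_lt_iff_lt_one_right h2n]

lemma uFM_eq_indicator :
    uFM = unitSq.indicator fun x => digitsValue 4 fun j => qdigit (j + 1) x := by
  simp [uFM, digitsValue]

lemma lcurve_eq (t : ℝ) : lcurve t =
    (digitsValue 2 fun j => tdigit (j + 1) t % 2, digitsValue 2 fun j => tdigit (j + 1) t / 2) := by
  simp [lcurve, digitsValue]

lemma measurable_uFM : Measurable uFM := by
  have hb : ∀ j, Measurable (bdigit j) := fun j =>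
    (Int.measurable_floor.comp (measurable_const_mul _)).sub
      ((Int.measurable_floor.comp (measurable_const_mul _)).const_mul 2)
  rw [uFM_eq_indicator]
  exact (measurable_digitsValue (by norm_num) (fun x j => qdigit_mem j x) fun j =>
    ((hb _).comp measurable_fst).add (((hb _).comp measurable_snd).const_mul 2)).indicator
      measurableSet_unitSq

/-- The level-`n` cells of `u` are the dyadic squares of side `2⁻ⁿ`, visited in Z-order. -/
lemma floor_four_pow_mul_uFM {x : ℝ × ℝ} (hx : x ∈ unitSq) (n : ℕ) :
    ⌊(4 : ℝ) ^ n * uFM x⌋ = morton n ⌊(2 : ℝ) ^ n * x.1⌋ ⌊(2 : ℝ) ^ n * x.2⌋ := by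
  obtain ⟨k, hkn, hk⟩ := exists_digit_lt (b := 2) one_lt_two x.2 n
  have hq : qdigit (k + 1) x < 4 - 1 := by
    obtain ⟨h1, h2⟩ := bdigit_mem k x.1
    obtain ⟨h3, h4⟩ := bdigit_mem k x.2
    simp only [Nat.cast_ofNat, ← bdigit_succ] at hk
    simp only [qdigit]
    omega
  rw [uFM_eq_indicator, indicator_of_mem hx, floor_two_pow_mul hx.1, floor_two_pow_mul hx.2,
    morton_ofDigitsPrefix (fun j => bdigit_mem j _) (fun j => bdigit_mem j _)]
  simpa [qdigit] using
    floor_pow_mul_digitsValue (b := 4) (by norm_num) (fun j => qdigit_mem j x) ⟨k, hkn, hq⟩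

lemma floor_four_pow_mul {t : ℝ} (ht : t ∈ Ico 0 1) (n : ℕ) :
    ⌊(4 : ℝ) ^ n * t⌋ = ofDigitsPrefix 4 (fun j => tdigit (j + 1) t) n := by
  simpa using floor_pow_mul_eq_ofDigitsPrefix (b := 4) ht (fun j => by simp [tdigit_succ]) n

lemma floor_four_pow_mul_eq_morton {t : ℝ} (ht : t ∈ Ico 0 1) (n : ℕ) :
    ⌊(4 : ℝ) ^ n * t⌋ = morton n (ofDigitsPrefix 2 (fun j => tdigit (j + 1) t % 2) n)
      (ofDigitsPrefix 2 (fun j => tdigit (j + 1) t / 2) n) := by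
  rw [floor_four_pow_mul ht, morton_ofDigitsPrefix (fun j => tdigit_emod_two_mem j t)
    (fun j => tdigit_ediv_two_mem j t)]
  simp only [Int.emod_add_mul_ediv]

lemma uFM_mem_Ico {x : ℝ × ℝ} (hx : x ∈ unitSq) : uFM x ∈ Ico 0 1 :=
  Int.floor_eq_zero_iff.1 (by simpa [morton] using floor_four_pow_mul_uFM hx 0)

lemma volume_setOf_floor_mul_eq {c : ℝ} (hc : 0 < c) (p : ℤ) :
    volume {s : ℝ | ⌊c * s⌋ = p} = ENNReal.ofReal c⁻¹ := by
  have : {s : ℝ | ⌊c * s⌋ = p} = (c * ·) ⁻¹' Ico (p : ℝ) (p + 1) := by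
    ext s
    simp [Int.floor_eq_iff]
  rw [this, Real.volume_preimage_mul_left hc.ne', Real.volume_Ico, abs_of_pos (inv_pos.2 hc)]
  simp

lemma exists_unitSq_inter_floor_eq_prod {n : ℕ} {m : ℤ} (hm : m ∈ Ico 0 (4 ^ n)) :
    ∃ p q : ℤ, unitSq ∩ {x | ⌊(4 : ℝ) ^ n * uFM x⌋ = m} =
      {s : ℝ | ⌊(2 : ℝ) ^ n * s⌋ = p} ×ˢ {s : ℝ | ⌊(2 : ℝ) ^ n * s⌋ = q} := by
  obtain ⟨⟨p, q⟩, ⟨hp, hq⟩, hpq⟩ := morton_surjOn n hm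
  refine ⟨p, q, Set.ext fun x => ⟨fun ⟨hx, hxm⟩ => ?_, fun ⟨hx1, hx2⟩ => ?_⟩⟩
  · replace hxm : ⌊(4 : ℝ) ^ n * uFM x⌋ = m := hxm
    rw [floor_four_pow_mul_uFM hx, ← hpq] at hxm
    have := morton_injOn n (x₁ := (⌊(2 : ℝ) ^ n * x.1⌋, ⌊(2 : ℝ) ^ n * x.2⌋))
      ⟨(floor_two_pow_mul_mem_Ico_iff n _).2 hx.1, (floor_two_pow_mul_mem_Ico_iff n _).2 hx.2⟩
      ⟨hp, hq⟩ hxm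
    simpa [Prod.ext_iff] using this
  · simp only [mem_ofPred_eq] at hx1 hx2
    have hx : x ∈ unitSq := ⟨(floor_two_pow_mul_mem_Ico_iff n _).1 (hx1 ▸ hp),
      (floor_two_pow_mul_mem_Ico_iff n _).1 (hx2 ▸ hq)⟩
    exact ⟨hx, by rw [mem_ofPred_eq, floor_four_pow_mul_uFM hx, hx1, hx2]; exact hpq⟩

lemma volume_unitSq_inter_floor_eq {n : ℕ} {m : ℤ} (hm : m ∈ Ico 0 (4 ^ n)) :
    volume (unitSq ∩ {x | ⌊(4 : ℝ) ^ n * uFM x⌋ = m}) =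
      ENNReal.ofReal ((4 : ℝ) ^ n)⁻¹ := by
  obtain ⟨p, q, h⟩ := exists_unitSq_inter_floor_eq_prod hm
  rw [h, Measure.volume_eq_prod, Measure.prod_prod, volume_setOf_floor_mul_eq (by positivity),
    volume_setOf_floor_mul_eq (by positivity), ← ENNReal.ofReal_mul (by positivity),
    ← mul_inv, ← mul_pow]
  norm_num

lemma volume_unitSq_inter_preimage_Iio_div_four_pow {n m : ℕ} (hm : m ≤ 4 ^ n) :
    volume (unitSq ∩ uFM ⁻¹' Iio ((m : ℝ) / 4 ^ n)) =
      ENNReal.ofReal ((m : ℝ) / 4 ^ n) := by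
  have h4n : (0 : ℝ) < 4 ^ n := by positivity
  have hcells : unitSq ∩ uFM ⁻¹' Iio ((m : ℝ) / 4 ^ n) =
      ⋃ k ∈ Finset.range m, unitSq ∩ {x | ⌊(4 : ℝ) ^ n * uFM x⌋ = (k : ℤ)} := by
    ext x
    simp only [mem_inter_iff, mem_preimage, mem_Iio, mem_iUnion, mem_ofPred_eq, Finset.mem_range,
      exists_prop]
    refine ⟨fun ⟨hx, hu⟩ => ?_, fun ⟨k, hk, hx, hxk⟩ => ⟨hx, ?_⟩⟩
    · have h0 : 0 ≤ ⌊(4 : ℝ) ^ n * uFM x⌋ := Int.floor_nonneg.2 (by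
        have := (uFM_mem_Ico hx).1; positivity)
      have h1 : ⌊(4 : ℝ) ^ n * uFM x⌋ < m := Int.floor_lt.2 (by
        rw [lt_div_iff₀ h4n] at hu; push_cast; linarith)
      exact ⟨⌊(4 : ℝ) ^ n * uFM x⌋.toNat, by omega, hx, by omega⟩
    · have h1 := Int.lt_floor_add_one ((4 : ℝ) ^ n * uFM x)
      rw [hxk] at h1
      have hk' : ((k : ℤ) : ℝ) + 1 ≤ m := by exact_mod_cast hk
      rw [lt_div_iff₀ h4n]
      linarith
  rw [hcells, measure_biUnion_finset]
  · rw [Finset.sum_congr rfl fun k hk => volume_unitSq_inter_floor_eq ⟨by positivity, by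
      exact_mod_cast (Finset.mem_range.1 hk).trans_le hm⟩]
    rw [Finset.sum_const, Finset.card_range, nsmul_eq_mul, ← ENNReal.ofReal_natCast,
      ← ENNReal.ofReal_mul (by positivity), div_eq_mul_inv]
  · intro k _ k' _ hkk'
    refine Set.disjoint_left.2 fun x hx hx' => hkk' ?_
    have h : ⌊(4 : ℝ) ^ n * uFM x⌋ = k := hx.2
    have h' : ⌊(4 : ℝ) ^ n * uFM x⌋ = k' := hx'.2
    omega
  · exact fun k _ => measurableSet_unitSq.inter
      ((measurable_uFM.const_mul _).floor (measurableSet_singleton _))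

lemma volume_unitSq_inter_preimage_Iio {c : ℝ} (hc : c ∈ Ico 0 1) :
    volume (unitSq ∩ uFM ⁻¹' Iio c) = ENNReal.ofReal c := by
  have h4 : Tendsto (fun n : ℕ => (4 : ℝ) ^ n) atTop atTop :=
    tendsto_pow_atTop_atTop_of_one_lt (by norm_num)
  set m : ℕ → ℕ := fun n => ⌊c * 4 ^ n⌋₊
  have hlow : Tendsto (fun n => (m n : ℝ) / 4 ^ n) atTop (𝓝 c) :=
    (tendsto_nat_floor_mul_div_atTop hc.1).comp h4
  have hup : Tendsto (fun n => ((m n + 1 : ℕ) : ℝ) / 4 ^ n) atTop (𝓝 c) := by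
    simpa [add_div] using hlow.add (tendsto_inv_atTop_zero.comp h4)
  have hm : ∀ n, (m n : ℝ) ≤ c * 4 ^ n ∧ c * 4 ^ n < m n + 1 := fun n =>
    ⟨Nat.floor_le (by have := hc.1; positivity), Nat.lt_floor_add_one _⟩
  have hm4 : ∀ n, m n + 1 ≤ 4 ^ n := fun n => by
    have : c * 4 ^ n < 4 ^ n := by nlinarith [hc.2, pow_pos (four_pos : (0 : ℝ) < 4) n]
    exact_mod_cast (Nat.floor_lt' (by positivity)).2 (by exact_mod_cast this)
  apply le_antisymm
  · refine ge_of_tendsto (ENNReal.tendsto_ofReal hup) (Eventually.of_forall fun n => ?_)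
    rw [← volume_unitSq_inter_preimage_Iio_div_four_pow (hm4 n)]
    refine measure_mono (inter_subset_inter_right _ (preimage_mono (Iio_subset_Iio ?_)))
    rw [le_div_iff₀ (by positivity)]
    push_cast
    linarith [hm n]
  · refine le_of_tendsto (ENNReal.tendsto_ofReal hlow) (Eventually.of_forall fun n => ?_)
    rw [← volume_unitSq_inter_preimage_Iio_div_four_pow (by have := hm4 n; omega)]
    refine measure_mono (inter_subset_inter_right _ (preimage_mono (Iio_subset_Iio ?_)))
    rw [div_le_iff₀ (by positivity)]
    linarith [hm n]

theorem measurePreserving_uFM :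
    MeasurePreserving uFM (volume.restrict unitSq) (volume.restrict (Ico 0 1)) := by
  have hIio : ∀ c, volume.restrict (Ico 0 1) (Iio c) =
      Measure.map uFM (volume.restrict unitSq) (Iio c) := by
    intro c
    rw [Measure.map_apply measurable_uFM measurableSet_Iio,
      Measure.restrict_apply measurableSet_Iio,
      Measure.restrict_apply (measurable_uFM measurableSet_Iio), inter_comm _ unitSq,
      inter_comm _ (Ico 0 1)]
    rcases lt_or_ge c 0 with hc | hc
    · have h1 : Ico 0 1 ∩ Iio c = ∅ := eq_empty_of_forall_notMem fun y ⟨hy, hyc⟩ => by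
        linarith [hy.1, mem_Iio.1 hyc]
      have h2 : unitSq ∩ uFM ⁻¹' Iio c = ∅ :=
        eq_empty_of_forall_notMem fun x ⟨hx, hxc⟩ => by
          linarith [(uFM_mem_Ico hx).1, show uFM x < c from hxc]
      rw [h1, h2, measure_empty, measure_empty]
    rcases lt_or_ge c 1 with hc1 | hc1
    · rw [volume_unitSq_inter_preimage_Iio ⟨hc, hc1⟩, Ico_inter_Iio, min_eq_right hc1.le,
        Real.volume_Ico, sub_zero]
    · have h1 : Ico 0 1 ∩ Iio c = Ico 0 1 := inter_eq_left.2 fun y hy => hy.2.trans_le hc1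
      have h2 : unitSq ∩ uFM ⁻¹' Iio c = unitSq :=
        inter_eq_left.2 fun x hx => (uFM_mem_Ico hx).2.trans_le hc1
      rw [h1, h2, volume_unitSq, Real.volume_Ico]
      simp
  refine ⟨measurable_uFM, (Measure.ext_of_Ico_finite _ _ ?_ fun a b hab => ?_).symm⟩
  · rw [Measure.map_apply measurable_uFM MeasurableSet.univ, preimage_univ,
      Measure.restrict_apply_univ, Measure.restrict_apply_univ, volume_unitSq, Real.volume_Ico]
    simp
  · have hsub : Iio a ⊆ Iio b := Iio_subset_Iio hab.le
    rw [← Iio_sdiff_Iio (a := b) (b := a),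
      measure_sdiff hsub nullMeasurableSet_Iio (measure_ne_top _ _),
      measure_sdiff hsub nullMeasurableSet_Iio (hIio a ▸ measure_ne_top _ _), hIio, hIio]

lemma volume_unitSq_inter_preimage_Icc {t h : ℝ} (ht : 0 ≤ t) (hth : t + h < 1) :
    volume (unitSq ∩ uFM ⁻¹' Icc t (t + h)) = ENNReal.ofReal h := by
  rw [inter_comm, ← Measure.restrict_apply (measurable_uFM measurableSet_Icc),
    measurePreserving_uFM.measure_preimage measurableSet_Icc.nullMeasurableSet,
    Measure.restrict_apply measurableSet_Icc, inter_eq_left.2 (Icc_subset_Ico ht hth),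
    Real.volume_Icc, add_sub_cancel_left]

lemma dist_lcurve_le_of_floor_eq {t : ℝ} (ht : t ∈ Ico 0 1) {x : ℝ × ℝ} (hx : x ∈ unitSq)
    {n : ℕ} (hxt : ⌊(4 : ℝ) ^ n * uFM x⌋ = ⌊(4 : ℝ) ^ n * t⌋) :
    dist x (lcurve t) ≤ ((2 : ℝ) ^ n)⁻¹ := by
  have ha : ∀ j, tdigit (j + 1) t % 2 ∈ Ico 0 ((2 : ℕ) : ℤ) := (tdigit_emod_two_mem · t)
  have hc : ∀ j, tdigit (j + 1) t / 2 ∈ Ico 0 ((2 : ℕ) : ℤ) := (tdigit_ediv_two_mem · t)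
  rw [floor_four_pow_mul_uFM hx, floor_four_pow_mul_eq_morton ht] at hxt
  have hP := ofDigitsPrefix_mem ha n
  have hQ := ofDigitsPrefix_mem hc n
  push_cast at hP hQ
  have h := morton_injOn n (x₁ := (⌊(2 : ℝ) ^ n * x.1⌋, ⌊(2 : ℝ) ^ n * x.2⌋))
    ⟨(floor_two_pow_mul_mem_Ico_iff n _).2 hx.1, (floor_two_pow_mul_mem_Ico_iff n _).2 hx.2⟩
    (x₂ := (_, _)) ⟨hP, hQ⟩ hxt
  simp only [Prod.mk.injEq] at h
  rw [lcurve_eq, Prod.dist_eq, Real.dist_eq, Real.dist_eq]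
  exact max_le (by simpa using abs_sub_digitsValue_le (by norm_num) ha (by simpa using h.1))
    (by simpa using abs_sub_digitsValue_le (by norm_num) hc (by simpa using h.2))

lemma eventually_unitSq_inter_preimage_Icc_subset_ball {t : ℝ} (ht : t ∈ Ico 0 1) {δ : ℝ}
    (hδ : 0 < δ) :
    ∀ᶠ h in 𝓝[>] 0, unitSq ∩ uFM ⁻¹' Icc t (t + h) ⊆ Metric.ball (lcurve t) δ := by
  obtain ⟨n, hn⟩ := exists_pow_lt_of_lt_one hδ (by norm_num : (2 : ℝ)⁻¹ < 1)
  have h4n : (0 : ℝ) < 4 ^ n := by positivity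
  have hgap : 0 < (⌊(4 : ℝ) ^ n * t⌋ + 1) / 4 ^ n - t := by
    rw [sub_pos, lt_div_iff₀ h4n, mul_comm]
    exact Int.lt_floor_add_one _
  filter_upwards [Ioo_mem_nhdsGT hgap] with h hh x ⟨hx, hxt, hxth⟩
  have hfloor : ⌊(4 : ℝ) ^ n * uFM x⌋ = ⌊(4 : ℝ) ^ n * t⌋ := by
    have hh := hh.2
    rw [lt_sub_iff_add_lt, lt_div_iff₀ h4n] at hh
    rw [Int.floor_eq_iff]
    constructor <;> nlinarith [Int.floor_le ((4 : ℝ) ^ n * t)]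
  rw [Metric.mem_ball]
  exact (dist_lcurve_le_of_floor_eq ht hx hfloor).trans_lt (by rwa [← inv_pow])

theorem stmt18_general (t : ℝ) (ht : t ∈ Set.Ico (0:ℝ) 1)
    (f : ℝ × ℝ → ℝ) (hf : Continuous f) :
    Filter.Tendsto
      (fun h : ℝ =>
        (1 / h) * ∫ x in {x : ℝ × ℝ | x ∈ unitSq ∧ t ≤ uFM x ∧ uFM x ≤ t + h}, f x)
      (nhdsWithin 0 (Set.Ioi 0)) (nhds (f (lcurve t))) := by
  refine tendsto_setIntegral_div_of_concentrates (S := fun h => unitSq ∩ uFM ⁻¹' Icc t (t + h))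
    hf.continuousAt hf.aestronglyMeasurable
    (fun h => measurableSet_unitSq.inter (measurable_uFM measurableSet_Icc)) ?_
    fun δ hδ => eventually_unitSq_inter_preimage_Icc_subset_ball ht hδ
  filter_upwards [Ioo_mem_nhdsGT (sub_pos.2 ht.2)] with h hh
  exact volume_unitSq_inter_preimage_Icc ht.1 (by linarith [hh.2])

/-- The normalized level bands of `u` concentrate to a Dirac mass on the Lebesgue curve:
for every `t ∈ [0,1)` and every bounded continuous `f`,
`(1/h) ∫_{{t ≤ u ≤ t+h}} f dL² → f(γ(t))` as `h → 0⁺`. -/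
theorem stmt18 (t : ℝ) (ht : t ∈ Set.Ico (0:ℝ) 1)
    (f : ℝ × ℝ → ℝ) (hf : Continuous f) (hfb : ∃ C : ℝ, ∀ x, |f x| ≤ C) :
    Filter.Tendsto
      (fun h : ℝ =>
        (1 / h) * ∫ x in {x : ℝ × ℝ | x ∈ unitSq ∧ t ≤ uFM x ∧ uFM x ≤ t + h}, f x)
      (nhdsWithin 0 (Set.Ioi 0)) (nhds (f (lcurve t))) :=
  stmt18_general t ht f hf
end
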